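/- arXiv:2403.04100 — 2 statements merged into one kernel-verified Lean document; each statement's English description precedes it below -/
import Mathlib

section
/- Saving works: let S be the set of indices j that occur as n−1−low(C_{i}) (0-based) for nonzero columns C_i of the reduced coboundary matrix; then S is exactly the set of negative simplices, and the twist reduction of the matrix B' obtained from the boundary matrix B by zeroing all columns outside S equals the twist reduction of B. -/
/-- Left-to-right column addition over ℤ/2: add column `i` to column `j`. -/
def colAdd {n : ℕ} (M : Matrix (Fin n) (Fin n) (ZMod 2)) (i j : Fin n) :
    Matrix (Fin n) (Fin n) (ZMod 2) :=
  fun r c => if c = j then M r j + M r i else M r c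

/-- One step of left-to-right column reduction: add some column `i` to a
later column `j`. -/
def Step {n : ℕ} (M N : Matrix (Fin n) (Fin n) (ZMod 2)) : Prop :=
  ∃ i j : Fin n, i < j ∧ N = colAdd M i j

/-- `R` is obtained from `M` by a finite sequence of left-to-right column
additions. -/
def Reduces {n : ℕ} (M R : Matrix (Fin n) (Fin n) (ZMod 2)) : Prop :=
  Relation.ReflTransGen Step M R

/-- `i` is the lowest one (largest row index of a nonzero entry) of
column `j` of `R`. -/
def IsLow {n : ℕ} (R : Matrix (Fin n) (Fin n) (ZMod 2)) (i j : Fin n) : Prop :=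
  R i j ≠ 0 ∧ ∀ r, R r j ≠ 0 → r ≤ i

/-- A matrix is reduced if distinct nonzero columns have distinct lowest ones. -/
def Reduced {n : ℕ} (R : Matrix (Fin n) (Fin n) (ZMod 2)) : Prop :=
  ∀ i j j', IsLow R i j → IsLow R i j' → j = j'

/-- The ℤ/2 boundary matrix of a sequence of simplices `σ`:
entry (i,j) is 1 iff `σ i` is a codimension-1 face of `σ j`. -/
def bmat {V : Type} [DecidableEq V] {n : ℕ} (σ : Fin n → Finset V) :
    Matrix (Fin n) (Fin n) (ZMod 2) :=
  fun i j => if σ i ⊆ σ j ∧ (σ i).card + 1 = (σ j).card then 1 else 0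


/-- (i, j) is a persistence pair of `M`. -/
def PersPair {n : ℕ} (M : Matrix (Fin n) (Fin n) (ZMod 2)) (i j : Fin n) : Prop :=
  ∃ R, Reduces M R ∧ Reduced R ∧ IsLow R i j

/-- The anti-transpose (coboundary matrix, when applied to a boundary matrix). -/
def antiTranspose {n : ℕ} (M : Matrix (Fin n) (Fin n) (ZMod 2)) :
    Matrix (Fin n) (Fin n) (ZMod 2) :=
  fun i j => M j.rev i.rev

/-- Twist-style reduction: `R` is reduced and is obtained from `M` by
left-to-right column additions in which only already fully reduced columns
(columns that already agree with their final value in `R`) are added to later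
columns — as in the twist algorithm with clearing. -/
def FinalReduces {n : ℕ} (M R : Matrix (Fin n) (Fin n) (ZMod 2)) : Prop :=
  Reduced R ∧
    Relation.ReflTransGen
      (fun A A' => ∃ i j : Fin n, i < j ∧ (∀ r, A r i = R r i) ∧ A' = colAdd A i j) M R

/-!
The pairing of a matrix can be read off the ranks of its lower-left blocks (rows `≥ p`, columns
`≤ q`). These ranks do not change under left-to-right column additions, and for a reduced matrix
they count the lowest ones lying in the block, so an inclusion–exclusion of four of them detects
the pairs. Anti-transposition maps lower-left blocks to transposed lower-left blocks, so the pairs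
of the reduced coboundary matrix are the reversed pairs of the boundary matrix: `S` is the set of
negative columns.

A reduced `R` is reached from `M` by twist steps iff it is reached by arbitrary left-to-right
additions, iff each column of `R` differs from the same column of `M` by a combination of earlier
columns of `R`. A column that is not negative is zero in every reduced reduction, and in the
boundary matrix it is a combination of earlier columns; so the condition holds for `B` iff it
holds for the cleared matrix `B'`.
-/

open Finset Matrix Relation

section LastNonzero

variable {κ K : Type*} [LinearOrder κ]

/-- For a matrix, `IsLow R a c` unfolds to `IsLastNonzero (R.col c) a`. -/
def IsLastNonzero [Zero K] (v : κ → K) (ℓ : κ) : Prop :=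
  v ℓ ≠ 0 ∧ ∀ r, v r ≠ 0 → r ≤ ℓ

namespace IsLastNonzero

variable [Zero K] {v : κ → K} {ℓ ℓ' : κ}

theorem unique (h : IsLastNonzero v ℓ) (h' : IsLastNonzero v ℓ') : ℓ = ℓ' :=
  le_antisymm (h'.2 ℓ h.1) (h.2 ℓ' h'.1)

theorem apply_eq_zero_of_lt (h : IsLastNonzero v ℓ) {r : κ} (hr : ℓ < r) : v r = 0 :=
  not_not.1 fun hne => (h.2 r hne).not_gt hr

end IsLastNonzero

theorem exists_isLastNonzero [Fintype κ] [Zero K] {v : κ → K} (hv : v ≠ 0) :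
    ∃ ℓ, IsLastNonzero v ℓ := by
  classical
  obtain ⟨r, hr⟩ := Function.ne_iff.1 hv
  obtain ⟨ℓ, hℓ, hmax⟩ :=
    (univ.filter (v · ≠ 0)).exists_max_image id ⟨r, by simpa using hr⟩
  exact ⟨ℓ, (mem_filter.1 hℓ).2, fun r hr => hmax r (by simpa using hr)⟩

theorem isLastNonzero_restrict_iff [Zero K] {I : Finset κ} (hI : IsUpperSet (I : Set κ))
    {v : κ → K} {ℓ : κ} (hℓ : ℓ ∈ I) :
    IsLastNonzero (fun r : I => v r) ⟨ℓ, hℓ⟩ ↔ IsLastNonzero v ℓ := by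
  refine ⟨fun h => ⟨h.1, fun r hr => ?_⟩, fun h => ⟨h.1, fun r hr => h.2 r hr⟩⟩
  by_contra hlt
  exact hlt (h.2 ⟨r, hI (not_le.1 hlt).le hℓ⟩ hr)

theorem restrict_eq_zero_of_forall_not_isLastNonzero [Fintype κ] [Zero K] {I : Finset κ}
    (hI : IsUpperSet (I : Set κ)) {v : κ → K} (h : ∀ ℓ ∈ I, ¬IsLastNonzero v ℓ) :
    (fun r : I => v r) = 0 := by
  funext r
  by_contra hr
  obtain ⟨ℓ, hℓ⟩ := exists_isLastNonzero (Function.ne_iff.2 ⟨r.1, hr⟩)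
  exact h ℓ (hI (hℓ.2 r hr) r.2) hℓ

/-- In a vanishing combination, the term whose last nonzero entry is largest would be the only
one contributing at that entry. -/
theorem linearIndependent_of_isLastNonzero [Field K] {ι : Type*} {v : ι → κ → K}
    (hlow : ∀ i, ∃ ℓ, IsLastNonzero (v i) ℓ)
    (hinj : ∀ i j ℓ, IsLastNonzero (v i) ℓ → IsLastNonzero (v j) ℓ → i = j) :
    LinearIndependent K v := by
  classical
  choose ℓ hℓ using hlow
  rw [linearIndependent_iff']
  intro s g hsum
  by_contra! hne
  obtain ⟨i₀, hi₀, hmax⟩ := (s.filter (g · ≠ 0)).exists_max_image ℓ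
    (let ⟨i, hi, hgi⟩ := hne; ⟨i, mem_filter.2 ⟨hi, hgi⟩⟩)
  rw [mem_filter] at hi₀
  have hsum₀ := congrFun hsum (ℓ i₀)
  rw [Finset.sum_apply, Finset.sum_eq_single_of_mem i₀ hi₀.1] at hsum₀
  · exact mul_ne_zero hi₀.2 (hℓ i₀).1 hsum₀
  · intro i hi hii₀
    by_cases hgi : g i = 0
    · simp [hgi]
    have hlt : ℓ i < ℓ i₀ := (hmax i (mem_filter.2 ⟨hi, hgi⟩)).lt_of_ne
      fun h => hii₀ (hinj i i₀ _ (hℓ i) (h ▸ hℓ i₀))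
    simp [(hℓ i).apply_eq_zero_of_lt hlt]

end LastNonzero

theorem card_filter_Iic {α : Type*} [LinearOrder α] [LocallyFiniteOrderBot α] {P : α → Prop}
    [DecidablePred P] (q : α) :
    #{c ∈ Iic q | P c} = #{c ∈ Iio q | P c} + if P q then 1 else 0 := by
  rw [← Iio_insert, filter_insert]
  split_ifs
  · rw [card_insert_of_notMem (by simp)]
  · rfl

section UpdateCol

variable {m ι α : Type*} [DecidableEq ι] (A : Matrix m ι α) {k : ι} (w : m → α)

theorem col_updateCol_self : (A.updateCol k w).col k = w := by
  ext r
  simp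

theorem col_updateCol_of_ne {b : ι} (h : b ≠ k) : (A.updateCol k w).col b = A.col b := by
  ext r
  simp [updateCol_ne h]

end UpdateCol

section ColumnReduction

variable {n : ℕ} {M M' N R : Matrix (Fin n) (Fin n) (ZMod 2)} {i j a b c : Fin n}

theorem Reduced.linearIndependent_col (hR : Reduced R) :
    LinearIndependent (ZMod 2) fun c : {c // R.col c ≠ 0} => R.col c :=
  linearIndependent_of_isLastNonzero (fun c => exists_isLastNonzero c.2)
    fun c c' a h h' => Subtype.ext (hR a c c' h h')

theorem col_colAdd (M : Matrix (Fin n) (Fin n) (ZMod 2)) (i j c : Fin n) :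
    (colAdd M i j).col c = if c = j then M.col j + M.col i else M.col c := by
  ext r
  by_cases h : c = j <;> simp [colAdd, h]

theorem colAdd_colAdd (M : Matrix (Fin n) (Fin n) (ZMod 2)) (h : i ≠ j) :
    colAdd (colAdd M i j) i j = M := by
  ext r c
  by_cases hc : c = j <;> simp [colAdd, hc, h, add_assoc, CharTwo.add_self_eq_zero]

def spanBefore (M : Matrix (Fin n) (Fin n) (ZMod 2)) (c : Fin n) :
    Submodule (ZMod 2) (Fin n → ZMod 2) :=
  Submodule.span (ZMod 2) (M.col '' Set.Iio c)

theorem col_mem_spanBefore (h : b < c) : M.col b ∈ spanBefore M c :=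
  Submodule.subset_span ⟨b, h, rfl⟩

theorem Reduced.col_eq_zero_of_mem_spanBefore (hR : Reduced R)
    (h : R.col c ∈ spanBefore R c) : R.col c = 0 := by
  by_contra hc
  refine hR.linearIndependent_col.notMem_span_image (s := {x | x.1 < c}) (x := ⟨c, hc⟩)
    (lt_irrefl c) (Submodule.span_le.2 ?_ h)
  rintro _ ⟨b, hb, rfl⟩
  by_cases hb0 : R.col b = 0
  · simp [hb0]
  · exact Submodule.subset_span ⟨⟨b, hb0⟩, hb, rfl⟩

theorem spanBefore_colAdd_le (hij : i < j) (c : Fin n) :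
    spanBefore (colAdd M i j) c ≤ spanBefore M c := by
  refine Submodule.span_le.2 ?_
  rintro _ ⟨b, hb, rfl⟩
  rw [col_colAdd]
  split_ifs with hbj
  · subst hbj
    exact add_mem (col_mem_spanBefore hb) (col_mem_spanBefore (hij.trans hb))
  · exact col_mem_spanBefore hb

theorem spanBefore_colAdd (hij : i < j) (c : Fin n) :
    spanBefore (colAdd M i j) c = spanBefore M c :=
  le_antisymm (spanBefore_colAdd_le hij c) <| by
    simpa only [colAdd_colAdd M hij.ne] using spanBefore_colAdd_le (M := colAdd M i j) hij c

theorem Reduces.spanBefore_eq (h : Reduces M N) (c : Fin n) :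
    spanBefore N c = spanBefore M c := by
  induction h with
  | refl => rfl
  | tail _ hstep ih =>
    obtain ⟨i, j, hij, rfl⟩ := hstep
    rw [spanBefore_colAdd hij, ih]

theorem Reduces.col_sub_mem_spanBefore (h : Reduces M N) (c : Fin n) :
    N.col c - M.col c ∈ spanBefore M c := by
  induction h with
  | refl => simp
  | @tail A _ hMA hstep ih =>
    obtain ⟨i, j, hij, rfl⟩ := hstep
    rw [← sub_add_sub_cancel _ (A.col c)]
    refine add_mem ?_ ih
    rw [col_colAdd]
    split_ifs with hcj
    · subst hcj
      rw [add_sub_cancel_left, ← Reduces.spanBefore_eq hMA]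
      exact col_mem_spanBefore hij
    · simp

/-- The step relation of `FinalReduces _ R`. -/
def TwistStep (R A A' : Matrix (Fin n) (Fin n) (ZMod 2)) : Prop :=
  ∃ i j : Fin n, i < j ∧ (∀ r, A r i = R r i) ∧ A' = colAdd A i j

theorem reflTransGen_twistStep_updateCol {k : Fin n} {v : Fin n → ZMod 2}
    (hv : v ∈ spanBefore R k) {A : Matrix (Fin n) (Fin n) (ZMod 2)}
    (hA : ∀ b < k, A.col b = R.col b) :
    ReflTransGen (TwistStep R) A (A.updateCol k (A.col k + v)) := by
  induction hv using Submodule.span_induction generalizing A with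
  | mem x hx =>
    obtain ⟨b, hb, rfl⟩ := hx
    refine .single ⟨b, k, hb, fun r => congrFun (hA b hb) r, ?_⟩
    ext r c
    by_cases hc : c = k
    · subst hc
      simp [colAdd, ← hA b hb]
    · simp [colAdd, hc]
  | zero => rw [add_zero, col_apply', updateCol_eq_self]
  | add x y _ _ hx hy =>
    have hy' := hy (A := A.updateCol k (A.col k + x)) fun b hb => by
      rw [col_updateCol_of_ne _ _ hb.ne, hA b hb]
    rw [col_updateCol_self, updateCol_idem, add_assoc] at hy'
    exact (hx hA).trans hy'
  | smul t x _ hx =>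
    obtain rfl | rfl : t = 0 ∨ t = 1 := by decide +revert
    · rw [zero_smul, add_zero, col_apply', updateCol_eq_self]
    · rw [one_smul]
      exact hx hA

/-- The columns are fixed from left to right, so that the columns added to column `k` already
agree with `R`. -/
theorem reflTransGen_twistStep_of_forall_sub_mem
    (h : ∀ c, R.col c - M.col c ∈ spanBefore R c) : ReflTransGen (TwistStep R) M R := by
  let A : ℕ → Matrix (Fin n) (Fin n) (ZMod 2) := fun k =>
    of fun r c => if c.1 < k then R r c else M r c
  have hA : ∀ k ≤ n, ReflTransGen (TwistStep R) M (A k) := by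
    intro k
    induction k with
    | zero =>
      intro _
      convert ReflTransGen.refl
      ext
      simp [A]
    | succ k ih =>
      intro hk
      refine (ih (by omega)).trans ?_
      convert reflTransGen_twistStep_updateCol (h ⟨k, hk⟩) (A := A k)
        (fun b hb => by ext r; simp [A, show b.1 < k from hb]) using 1
      ext r c
      rcases lt_trichotomy c.1 k with hc | hc | hc
      · simp [A, hc, updateCol_ne (Fin.ne_of_lt hc : c ≠ ⟨k, hk⟩), Nat.lt_succ_of_lt hc]
      · obtain rfl : c = ⟨k, hk⟩ := Fin.ext hc
        simp [A]
      · simp [A, updateCol_ne (Fin.ne_of_gt hc : c ≠ ⟨k, hk⟩), show ¬c.1 ≤ k by omega,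
          show ¬c.1 < k by omega]
  have hAn : A n = R := by
    ext r c
    simp [A]
  exact hAn ▸ hA n le_rfl

theorem reduces_iff_forall_col_sub_mem_spanBefore :
    Reduces M R ↔ ∀ c, R.col c - M.col c ∈ spanBefore R c :=
  ⟨fun h c => h.spanBefore_eq c ▸ h.col_sub_mem_spanBefore c, fun h =>
    ReflTransGen.mono (fun _ _ ⟨i, j, hij, _, hA'⟩ => ⟨i, j, hij, hA'⟩) _ _
      (reflTransGen_twistStep_of_forall_sub_mem h)⟩

theorem finalReduces_iff : FinalReduces M R ↔ Reduced R ∧ Reduces M R :=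
  and_congr_right fun _ =>
    ⟨ReflTransGen.mono (fun _ _ ⟨i, j, hij, _, hA'⟩ => ⟨i, j, hij, hA'⟩) _ _, fun h =>
      reflTransGen_twistStep_of_forall_sub_mem (reduces_iff_forall_col_sub_mem_spanBefore.1 h)⟩

/-- The positions on or above the lowest one of their column: a termination measure for the
standard reduction algorithm. -/
def lowerSupport (M : Matrix (Fin n) (Fin n) (ZMod 2)) : Finset (Fin n × Fin n) :=
  univ.filter fun x => ∃ s, x.1 ≤ s ∧ M s x.2 ≠ 0

theorem lowerSupport_colAdd_ssubset (hi : IsLow M a i) (hj : IsLow M a j) :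
    lowerSupport (colAdd M i j) ⊂ lowerSupport M := by
  have hcol : ∀ s, colAdd M i j s j ≠ 0 → s < a := by
    intro s hs
    simp only [colAdd, if_true] at hs
    refine lt_of_le_of_ne (not_lt.1 fun has => hs ?_) fun hsa => hs ?_
    · have hsj : M s j = 0 := IsLastNonzero.apply_eq_zero_of_lt (v := M.col j) hj has
      have hsi : M s i = 0 := IsLastNonzero.apply_eq_zero_of_lt (v := M.col i) hi has
      rw [hsj, hsi, add_zero]
    · subst hsa
      exact (by decide +revert : ∀ x y : ZMod 2, x ≠ 0 → y ≠ 0 → x + y = 0) _ _ hj.1 hi.1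
  refine (ssubset_iff_of_subset fun x hx => ?_).2 ⟨(a, j), ?_, ?_⟩
  · simp only [lowerSupport, mem_filter, mem_univ, true_and] at hx ⊢
    obtain ⟨s, hxs, hs⟩ := hx
    by_cases hx2 : x.2 = j
    · exact ⟨a, hxs.trans (hcol s (hx2 ▸ hs)).le, hx2 ▸ hj.1⟩
    · exact ⟨s, hxs, by simpa [colAdd, hx2] using hs⟩
  · simpa [lowerSupport] using ⟨a, le_rfl, hj.1⟩
  · simpa [lowerSupport] using fun s has hs => (hcol s hs).not_ge has

theorem exists_reduces_reduced (M : Matrix (Fin n) (Fin n) (ZMod 2)) :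
    ∃ R, Reduces M R ∧ Reduced R := by
  obtain ⟨R, hMR, hmin⟩ :=
    (measure fun N => #(lowerSupport N)).wf.has_min {N | Reduces M N} ⟨M, .refl⟩
  refine ⟨R, hMR, fun a j j' h h' => ?_⟩
  by_contra hne
  wlog hlt : j < j' generalizing j j'
  · exact this j' j h' h (Ne.symm hne) ((not_lt.1 hlt).lt_of_ne (Ne.symm hne))
  exact hmin _ (ReflTransGen.tail hMR ⟨j, j', hlt, rfl⟩)
    (card_lt_card (lowerSupport_colAdd_ssubset h h'))

noncomputable def blockRank (M : Matrix (Fin n) (Fin n) (ZMod 2)) (I J : Finset (Fin n)) : ℕ :=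
  (M.submatrix ((↑) : I → Fin n) ((↑) : J → Fin n)).rank

theorem blockRank_colAdd (hij : i < j) (I : Finset (Fin n)) {J : Finset (Fin n)}
    (hJ : IsLowerSet (J : Set (Fin n))) : blockRank (colAdd M i j) I J = blockRank M I J := by
  unfold blockRank
  by_cases hj : j ∈ J
  · have hi : i ∈ J := hJ hij.le hj
    have hmul : (colAdd M i j).submatrix ((↑) : I → Fin n) ((↑) : J → Fin n) =
        M.submatrix ((↑) : I → Fin n) ((↑) : J → Fin n) *
          transvection (⟨i, hi⟩ : J) ⟨j, hj⟩ (1 : ZMod 2) := by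
      ext r c
      by_cases hc : c = ⟨j, hj⟩
      · subst hc
        simp [colAdd, add_comm]
      · have hcj : (c : Fin n) ≠ j := fun h => hc (Subtype.ext h)
        rw [mul_transvection_apply_of_ne (hb := hc)]
        simp [colAdd, hcj]
    rw [hmul, rank_mul_eq_left_of_isUnit_det]
    rw [det_transvection_of_ne (h := fun h => hij.ne (congrArg Subtype.val h))]
    exact isUnit_one
  · congr 1
    ext r c
    have hcj : (c : Fin n) ≠ j := fun h => hj (h ▸ c.2)
    simp [colAdd, hcj]

theorem Reduces.blockRank_eq (h : Reduces M N) (I : Finset (Fin n)) {J : Finset (Fin n)}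
    (hJ : IsLowerSet (J : Set (Fin n))) : blockRank N I J = blockRank M I J := by
  induction h with
  | refl => rfl
  | tail _ hstep ih =>
    obtain ⟨i, j, hij, rfl⟩ := hstep
    rw [blockRank_colAdd hij I hJ, ih]

theorem blockRank_antiTranspose (M : Matrix (Fin n) (Fin n) (ZMod 2)) (I J : Finset (Fin n)) :
    blockRank (antiTranspose M) I J =
      blockRank M (J.map Fin.revPerm.toEmbedding) (I.map Fin.revPerm.toEmbedding) := by
  let e : ∀ K : Finset (Fin n), K ≃ K.map Fin.revPerm.toEmbedding := fun K =>
    Fin.revPerm.subtypeEquiv fun a => by simp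
  have h : (antiTranspose M).submatrix ((↑) : I → Fin n) ((↑) : J → Fin n) =
      (M.submatrix (↑) (↑))ᵀ.submatrix (e I) (e J) := by
    ext r c
    simp [antiTranspose, e]
  rw [blockRank, h, rank_submatrix, rank_transpose, blockRank]

open Classical in
theorem Reduced.blockRank_eq_card (hR : Reduced R) {I : Finset (Fin n)}
    (hI : IsUpperSet (I : Set (Fin n))) (J : Finset (Fin n)) :
    blockRank R I J = #{c ∈ J | ∃ a ∈ I, IsLow R a c} := by
  set A := R.submatrix ((↑) : I → Fin n) ((↑) : J → Fin n)
  let T := {c : J // ∃ a ∈ I, IsLow R a c}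
  have hli : LinearIndependent (ZMod 2) fun c : T => A.col c := by
    refine linearIndependent_of_isLastNonzero (fun c => ?_) fun c c' ℓ h h' => ?_
    · obtain ⟨a, ha, hlow⟩ := c.2
      exact ⟨⟨a, ha⟩, (isLastNonzero_restrict_iff (v := R.col c) hI ha).2 hlow⟩
    · exact Subtype.ext <| Subtype.ext <| hR ℓ c c'
        ((isLastNonzero_restrict_iff (v := R.col c) hI ℓ.2).1 h)
        ((isLastNonzero_restrict_iff (v := R.col c') hI ℓ.2).1 h')
  have hspan : Submodule.span (ZMod 2) (Set.range A.col) =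
      Submodule.span (ZMod 2) (Set.range fun c : T => A.col c) := by
    refine le_antisymm (Submodule.span_le.2 ?_)
      (Submodule.span_mono (Set.range_comp_subset_range _ _))
    rintro _ ⟨c, rfl⟩
    by_cases hc : ∃ a ∈ I, IsLow R a c
    · exact Submodule.subset_span ⟨⟨c, hc⟩, rfl⟩
    · have hA : A.col c = 0 := restrict_eq_zero_of_forall_not_isLastNonzero (v := R.col c) hI
        fun a ha h => hc ⟨a, ha, h⟩
      rw [hA]
      exact zero_mem _
  rw [blockRank, rank_eq_finrank_span_cols, hspan, finrank_span_eq_card hli,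
    Fintype.card_subtype, univ_eq_attach]
  exact (congrArg card (filter_attach (fun c => ∃ a ∈ I, IsLow R a c) J)).trans
    ((card_map _).trans card_attach)

/-- The multiplicity of `(p, q)` in the persistence pairing, by inclusion–exclusion over the ranks
of lower-left blocks. -/
noncomputable def pairingNumber (M : Matrix (Fin n) (Fin n) (ZMod 2)) (p q : Fin n) : ℤ :=
  blockRank M (Ici p) (Iic q) + blockRank M (Ioi p) (Iio q) - blockRank M (Ici p) (Iio q) -
    blockRank M (Ioi p) (Iic q)

theorem Reduces.pairingNumber_eq (h : Reduces M N) (p q : Fin n) :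
    pairingNumber N p q = pairingNumber M p q := by
  have hIic : IsLowerSet ((Iic q : Finset (Fin n)) : Set (Fin n)) := by
    rw [coe_Iic]
    exact isLowerSet_Iic q
  have hIio : IsLowerSet ((Iio q : Finset (Fin n)) : Set (Fin n)) := by
    rw [coe_Iio]
    exact isLowerSet_Iio q
  simp only [pairingNumber, h.blockRank_eq _ hIic, h.blockRank_eq _ hIio]

theorem pairingNumber_antiTranspose (M : Matrix (Fin n) (Fin n) (ZMod 2)) (p q : Fin n) :
    pairingNumber (antiTranspose M) p q = pairingNumber M q.rev p.rev := by
  simp only [pairingNumber, blockRank_antiTranspose, Fin.map_revPerm_Ici, Fin.map_revPerm_Ioi,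
    Fin.map_revPerm_Iic, Fin.map_revPerm_Iio]
  ring

theorem Reduced.pairingNumber_eq_one_iff (hR : Reduced R) (p q : Fin n) :
    pairingNumber R p q = 1 ↔ IsLow R p q := by
  classical
  have hIci : IsUpperSet ((Ici p : Finset (Fin n)) : Set (Fin n)) := by
    rw [coe_Ici]
    exact isUpperSet_Ici p
  have hIoi : IsUpperSet ((Ioi p : Finset (Fin n)) : Set (Fin n)) := by
    rw [coe_Ioi]
    exact isUpperSet_Ioi p
  simp only [pairingNumber, hR.blockRank_eq_card hIci, hR.blockRank_eq_card hIoi, card_filter_Iic,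
    mem_Ici, mem_Ioi]
  push_cast
  by_cases hpq : IsLow R p q
  · have hex : ∃ a, p ≤ a ∧ IsLow R a q := ⟨p, le_rfl, hpq⟩
    have hnot : ¬∃ a, p < a ∧ IsLow R a q := fun ⟨a, ha, h⟩ =>
      ha.ne' (IsLastNonzero.unique (v := R.col q) h hpq)
    simp only [hpq, iff_true, if_pos hex, if_neg hnot]
    ring
  · have hiff : (∃ a, p ≤ a ∧ IsLow R a q) ↔ ∃ a, p < a ∧ IsLow R a q :=
      ⟨fun ⟨a, ha, h⟩ => ⟨a, ha.lt_of_ne fun e => hpq (e ▸ h), h⟩,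
        fun ⟨a, ha, h⟩ => ⟨a, ha.le, h⟩⟩
    simp only [hpq, iff_false, hiff]
    split_ifs <;> omega

theorem persPair_iff_pairingNumber_eq_one {p q : Fin n} :
    PersPair M p q ↔ pairingNumber M p q = 1 := by
  constructor
  · rintro ⟨R, hMR, hR, hpq⟩
    rwa [← hMR.pairingNumber_eq, hR.pairingNumber_eq_one_iff]
  · intro h
    obtain ⟨R, hMR, hR⟩ := exists_reduces_reduced M
    exact ⟨R, hMR, hR, (hR.pairingNumber_eq_one_iff p q).1 (hMR.pairingNumber_eq p q ▸ h)⟩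

theorem Reduced.isLow_iff_persPair_of_reduces_antiTranspose
    {C : Matrix (Fin n) (Fin n) (ZMod 2)} (hCred : Reduced C)
    (hC : Reduces (antiTranspose M) C) : IsLow C a b ↔ PersPair M b.rev a.rev := by
  rw [← hCred.pairingNumber_eq_one_iff, hC.pairingNumber_eq, pairingNumber_antiTranspose,
    persPair_iff_pairingNumber_eq_one]

theorem Reduced.col_eq_zero_of_not_persPair (hR : Reduced R) (hMR : Reduces M R)
    (hc : ¬∃ i, PersPair M i c) : R.col c = 0 := by
  by_contra h
  obtain ⟨a, ha⟩ := exists_isLastNonzero h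
  exact hc ⟨a, R, hMR, hR, ha⟩

theorem Reduced.reduces_iff_reduces_of_clear (hR : Reduced R)
    (hin : ∀ c, (∃ i, PersPair M i c) → M'.col c = M.col c)
    (hout : ∀ c, (¬∃ i, PersPair M i c) → M'.col c = 0) :
    Reduces M R ↔ Reduces M' R := by
  have forward : ∀ {R}, Reduced R → Reduces M R → Reduces M' R := by
    intro R hR hMR
    refine reduces_iff_forall_col_sub_mem_spanBefore.2 fun c => ?_
    by_cases hc : ∃ i, PersPair M i c
    · rw [hin c hc, hMR.spanBefore_eq]
      exact hMR.col_sub_mem_spanBefore c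
    · rw [hout c hc, hR.col_eq_zero_of_not_persPair hMR hc, sub_zero]
      exact zero_mem _
  refine ⟨forward hR, fun hM'R => reduces_iff_forall_col_sub_mem_spanBefore.2 fun c => ?_⟩
  by_cases hc : ∃ i, PersPair M i c
  · rw [← hin c hc, hM'R.spanBefore_eq]
    exact hM'R.col_sub_mem_spanBefore c
  · obtain ⟨R₀, hMR₀, hR₀⟩ := exists_reduces_reduced M
    have hRc : R.col c = 0 := hR.col_eq_zero_of_mem_spanBefore <| by
      simpa [hout c hc, hM'R.spanBefore_eq] using hM'R.col_sub_mem_spanBefore c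
    have hM : M.col c ∈ spanBefore M c := by
      simpa [hR₀.col_eq_zero_of_not_persPair hMR₀ hc] using hMR₀.col_sub_mem_spanBefore c
    rw [hRc, zero_sub, neg_mem_iff, hM'R.spanBefore_eq, ← (forward hR₀ hMR₀).spanBefore_eq,
      hMR₀.spanBefore_eq]
    exact hM

end ColumnReduction

theorem saving_works_general
    {V : Type} [DecidableEq V] {n : ℕ} (σ : Fin n → Finset V)
    (C : Matrix (Fin n) (Fin n) (ZMod 2))
    (hC : Reduces (antiTranspose (bmat σ)) C) (hCred : Reduced C)
    (S : Set (Fin n)) (hS : S = {j : Fin n | ∃ i, IsLow C j.rev i})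
    (B' : Matrix (Fin n) (Fin n) (ZMod 2))
    (hB'in : ∀ r c, c ∈ S → B' r c = bmat σ r c)
    (hB'out : ∀ r c, c ∉ S → B' r c = 0) :
    S = {j : Fin n | ∃ i, PersPair (bmat σ) i j} ∧
    ∀ R, FinalReduces (bmat σ) R ↔ FinalReduces B' R := by
  have hdual (i j : Fin n) : IsLow C j.rev i ↔ PersPair (bmat σ) i.rev j := by
    rw [hCred.isLow_iff_persPair_of_reduces_antiTranspose hC, Fin.rev_rev]
  have hneg : S = {j | ∃ i, PersPair (bmat σ) i j} := by
    rw [hS]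
    ext j
    exact ⟨fun ⟨i, h⟩ => ⟨i.rev, (hdual i j).1 h⟩,
      fun ⟨i, h⟩ => ⟨i.rev, (hdual i.rev j).2 (by rwa [Fin.rev_rev])⟩⟩
  subst hneg
  refine ⟨rfl, fun R => ?_⟩
  rw [finalReduces_iff, finalReduces_iff]
  exact and_congr_right fun hR => hR.reduces_iff_reduces_of_clear
    (fun c hc => funext fun r => hB'in r c hc) (fun c hc => funext fun r => hB'out r c hc)

/-- saving works.  Let `C` be the reduced coboundary matrix of
the filtration and let `S` be the set of indices `n − 1 − low(C_i)` (0-based)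
over nonzero columns `C_i` of `C`.  Then `S` is exactly the set of negative
simplices (second coordinates of persistence pairs of the boundary matrix `B`),
and the twist reduction of the matrix `B'` obtained from `B` by zeroing all
columns outside `S` coincides with the twist reduction of `B`. -/
theorem saving_works
    {V : Type} [DecidableEq V] {n : ℕ} (σ : Fin n → Finset V)
    (hinj : Function.Injective σ)
    (hne : ∀ i, (σ i).Nonempty)
    (hfilt : ∀ j : Fin n, ∀ t ⊆ σ j, t.Nonempty → ∃ i ≤ j, σ i = t)
    (C : Matrix (Fin n) (Fin n) (ZMod 2))
    (hC : Reduces (antiTranspose (bmat σ)) C) (hCred : Reduced C)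
    (S : Set (Fin n)) (hS : S = {j : Fin n | ∃ i, IsLow C j.rev i})
    (B' : Matrix (Fin n) (Fin n) (ZMod 2))
    (hB'in : ∀ r c, c ∈ S → B' r c = bmat σ r c)
    (hB'out : ∀ r c, c ∉ S → B' r c = 0) :
    S = {j : Fin n | ∃ i, PersPair (bmat σ) i j} ∧
    ∀ R, FinalReduces (bmat σ) R ↔ FinalReduces B' R :=
  saving_works_general σ C hC hCred S hS B' hB'in hB'out
end

section
/- If σ_j is a negative simplex with persistence pair (i, j), then the class of the cycle given by column R_j of the reduced boundary matrix generates the kernel of the map H_*(K_{j-1}) → H_*(K_j) induced by inclusion, and this kernel is one-dimensional. -/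
noncomputable def bnd (V : Type) [DecidableEq V] :
    (Finset V →₀ ZMod 2) →ₗ[ZMod 2] (Finset V →₀ ZMod 2) :=
  Finsupp.lsum ℕ fun s =>
    (LinearMap.id : ZMod 2 →ₗ[ZMod 2] ZMod 2).smulRight
      (∑ v ∈ s, Finsupp.single (s.erase v) (1 : ZMod 2))

/-- Chains supported on a given set of simplices. -/
noncomputable def chainsOn {V : Type} [DecidableEq V] (S : Set (Finset V)) :
    Submodule (ZMod 2) (Finset V →₀ ZMod 2) :=
  Finsupp.supported (ZMod 2) (ZMod 2) S

/-- Cycles supported on a given set of simplices. -/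
noncomputable def cyclesOn {V : Type} [DecidableEq V] (S : Set (Finset V)) :
    Submodule (ZMod 2) (Finset V →₀ ZMod 2) :=
  chainsOn S ⊓ LinearMap.ker (bnd V)

/-- Boundaries of chains supported on a given set of simplices. -/
noncomputable def boundariesOn {V : Type} [DecidableEq V] (S : Set (Finset V)) :
    Submodule (ZMod 2) (Finset V →₀ ZMod 2) :=
  Submodule.map (bnd V) (chainsOn S)

/-- The chain represented by column `j` of the matrix `R`: the sum of the
simplices whose row indices carry nonzero entries. -/
noncomputable def chainOf {V : Type} [DecidableEq V] {n : ℕ} (σ : Fin n → Finset V)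
    (R : Matrix (Fin n) (Fin n) (ZMod 2)) (j : Fin n) : Finset V →₀ ZMod 2 :=
  ∑ i : Fin n, Finsupp.single (σ i) (R i j)

/-!
Column reduction multiplies the boundary matrix `B` on the right by an upper unitriangular
matrix `U`, so column `j` of `R` is `B b` with `b j = 1` and `b k = 0` for `k > j`. Hence its chain
`z` is the boundary of `σ j` plus a chain of `K_{j-1}`, and every boundary `∂d` of `K_j` equals
`d j • z` modulo boundaries of `K_{j-1}`. If `z` were a boundary of `K_{j-1}`, some `a` with
`a j = 1` and vanishing beyond `j` would satisfy `B a = 0`, so `R (U⁻¹ a) = 0` with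
`(U⁻¹ a) j = 1`, which is impossible because the columns of a reduced matrix that have a lowest
one are linearly independent.
-/

open Matrix

section Boundary

variable {V : Type} [DecidableEq V]

lemma bnd_single (s : Finset V) (a : ZMod 2) :
    bnd V (Finsupp.single s a) = a • ∑ v ∈ s, Finsupp.single (s.erase v) 1 := by
  simp [bnd]

lemma bnd_bnd (x : Finset V →₀ ZMod 2) : bnd V (bnd V x) = 0 := by
  induction x using Finsupp.induction_linear with
  | zero => simp
  | add x y hx hy => rw [map_add, map_add, hx, hy, add_zero]
  | single s a =>
    simp only [bnd_single, one_smul, map_smul, map_sum, Finset.sum_sigma']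
    rw [Finset.sum_involution (fun p _ => ⟨p.2, p.1⟩), smul_zero]
    · intro p _
      rw [Finset.erase_right_comm]
      exact ZModModule.add_self _
    · intro p hp _ h
      exact (Finset.mem_erase.mp (Finset.mem_sigma.mp hp).2).1 (congrArg Sigma.fst h)
    · intro p hp
      obtain ⟨h1, h2⟩ := Finset.mem_sigma.mp hp
      obtain ⟨hne, h2⟩ := Finset.mem_erase.mp h2
      exact Finset.mem_sigma.mpr ⟨h2, Finset.mem_erase.mpr ⟨Ne.symm hne, h1⟩⟩
    · intro p _
      rfl

lemma bnd_single_one_apply (s t : Finset V) :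
    bnd V (Finsupp.single s 1) t = if t ⊆ s ∧ t.card + 1 = s.card then 1 else 0 := by
  rw [bnd_single, one_smul, Finsupp.finsetSum_apply]
  split_ifs with h
  · obtain ⟨w, hw, rfl⟩ := Finset.exists_eq_insert_iff.mpr h
    rw [Finset.sum_eq_single_of_mem w (Finset.mem_insert_self w t)]
    · rw [Finset.erase_insert hw, Finsupp.single_eq_same]
    · intro v _ hvw
      refine Finsupp.single_eq_of_ne fun he => hw ?_
      rw [he]
      exact Finset.mem_erase.mpr ⟨Ne.symm hvw, Finset.mem_insert_self w t⟩
  · refine Finset.sum_eq_zero fun v hv => Finsupp.single_eq_of_ne fun he => h ?_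
    rw [he]
    exact ⟨Finset.erase_subset v s, Finset.card_erase_add_one hv⟩

end Boundary

section Unitriangular

variable {m R : Type*} [LinearOrder m] [CommRing R]

def IsUpperUnitriangular (U : Matrix m m R) : Prop :=
  U.IsUpperTriangular ∧ ∀ k, U k k = 1

lemma isUpperUnitriangular_one [DecidableEq m] : IsUpperUnitriangular (1 : Matrix m m R) :=
  ⟨blockTriangular_one, fun _ => one_apply_eq _⟩

lemma isUpperUnitriangular_transvection [DecidableEq m] {i j : m} (h : i < j) (c : R) :
    IsUpperUnitriangular (transvection i j c) :=
  ⟨blockTriangular_transvection (b := id) h.le c, fun k => by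
    rw [transvection, Matrix.add_apply, one_apply_eq,
      single_apply_of_ne (h := fun h' => h.ne (h'.1.trans h'.2.symm)), add_zero]⟩

variable [Fintype m]

lemma IsUpperUnitriangular.mul {U T : Matrix m m R} (hU : IsUpperUnitriangular U)
    (hT : IsUpperUnitriangular T) : IsUpperUnitriangular (U * T) := by
  refine ⟨hU.1.mul hT.1, fun k => ?_⟩
  rw [mul_apply, Finset.sum_eq_single k, hU.2, hT.2, one_mul]
  · intro l _ hl
    rcases hl.lt_or_gt with h | h
    · rw [hU.1 h, zero_mul]
    · rw [hT.1 h, mul_zero]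
  · exact fun h => absurd (Finset.mem_univ k) h

lemma IsUpperUnitriangular.mulVec_apply {U : Matrix m m R} (hU : IsUpperUnitriangular U)
    {a : m → R} {j : m} (ha : ∀ k, j < k → a k = 0) : (U *ᵥ a) j = a j := by
  rw [mulVec, dotProduct, Finset.sum_eq_single j, hU.2, one_mul]
  · intro l _ hl
    rcases hl.lt_or_gt with h | h
    · rw [hU.1 h, zero_mul]
    · rw [ha l h, mul_zero]
  · exact fun h => absurd (Finset.mem_univ j) h

end Unitriangular

section Reduction

variable {n : ℕ} {M R : Matrix (Fin n) (Fin n) (ZMod 2)}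

lemma colAdd_eq_mul_transvection (M : Matrix (Fin n) (Fin n) (ZMod 2)) (i j : Fin n) :
    colAdd M i j = M * transvection i j 1 := by
  ext r c
  by_cases hc : c = j
  · subst hc
    rw [mul_transvection_apply_same, one_mul, colAdd, if_pos rfl]
  · rw [mul_transvection_apply_of_ne _ _ _ _ hc, colAdd, if_neg hc]

lemma Reduces.exists_eq_mul (h : Reduces M R) :
    ∃ U W : Matrix (Fin n) (Fin n) (ZMod 2), IsUpperUnitriangular U ∧
      IsUpperUnitriangular W ∧ U * W = 1 ∧ R = M * U := by
  induction h with
  | refl => exact ⟨1, 1, isUpperUnitriangular_one, isUpperUnitriangular_one, one_mul 1,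
      (mul_one M).symm⟩
  | tail _ hstep ih =>
    obtain ⟨U, W, hU, hW, hUW, rfl⟩ := ih
    obtain ⟨p, q, hpq, rfl⟩ := hstep
    have hT := isUpperUnitriangular_transvection hpq (1 : ZMod 2)
    refine ⟨U * transvection p q 1, transvection p q 1 * W, hU.mul hT, hT.mul hW,
      ?_, by rw [colAdd_eq_mul_transvection, mul_assoc]⟩
    have hTT : transvection p q (1 : ZMod 2) * transvection p q 1 = 1 := by
      rw [transvection_mul_transvection_same _ _ hpq.ne, ZModModule.add_self,
        transvection_zero]
    rw [mul_assoc, ← mul_assoc _ _ W, hTT, one_mul, hUW]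

lemma Reduces.apply_eq_zero_of_le (h : Reduces M R) (hM : ∀ r k, k ≤ r → M r k = 0)
    {r k : Fin n} (hkr : k ≤ r) : R r k = 0 := by
  induction h generalizing r k with
  | refl => exact hM r k hkr
  | tail _ hstep ih =>
    obtain ⟨p, q, hpq, rfl⟩ := hstep
    unfold colAdd
    split_ifs with hk
    · subst hk
      rw [ih hkr, ih (hpq.le.trans hkr), add_zero]
    · exact ih hkr

lemma exists_isLow {r k : Fin n} (h : R r k ≠ 0) : ∃ i, IsLow R i k := by
  obtain ⟨i, hi, hmax⟩ := Finset.exists_max_image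
    (Finset.univ.filter fun r => R r k ≠ 0) id ⟨r, Finset.mem_filter.mpr ⟨Finset.mem_univ r, h⟩⟩
  exact ⟨i, (Finset.mem_filter.mp hi).2, fun r hr => hmax r (Finset.mem_filter.mpr
    ⟨Finset.mem_univ r, hr⟩)⟩

/-- In a relation among the columns, the one with the largest lowest one is the only column
with a nonzero entry in that row. -/
lemma Reduced.eq_zero_of_mulVec_eq_zero (hR : Reduced R) {v : Fin n → ZMod 2}
    (hv : R *ᵥ v = 0) {i j : Fin n} (hlow : IsLow R i j) : v j = 0 := by
  classical
  by_contra hvj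
  obtain ⟨⟨i₀, k₀⟩, hmem, hmax⟩ := Finset.exists_max_image
    (Finset.univ.filter fun p : Fin n × Fin n => IsLow R p.1 p.2 ∧ v p.2 ≠ 0) Prod.fst
    ⟨(i, j), Finset.mem_filter.mpr ⟨Finset.mem_univ _, hlow, hvj⟩⟩
  obtain ⟨hlow₀, hv₀⟩ := (Finset.mem_filter.mp hmem).2
  have hrow := congrFun hv i₀
  rw [mulVec, dotProduct, Finset.sum_eq_single k₀, Pi.zero_apply] at hrow
  · exact mul_ne_zero hlow₀.1 hv₀ hrow
  · intro k _ hk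
    by_contra hne
    obtain ⟨hRk, hvk⟩ := mul_ne_zero_iff.mp hne
    obtain ⟨i', hi'⟩ := exists_isLow hRk
    have hle : i' ≤ i₀ := hmax (i', k) (Finset.mem_filter.mpr ⟨Finset.mem_univ _, hi', hvk⟩)
    have heq : i' = i₀ := le_antisymm hle (hi'.2 i₀ hRk)
    exact hk (hR i₀ k k₀ (heq ▸ hi') hlow₀)
  · exact fun h => absurd (Finset.mem_univ k₀) h

lemma Reduces.eq_zero_of_mulVec_eq_zero (h : Reduces M R) (hR : Reduced R) {i j : Fin n}
    (hlow : IsLow R i j) {a : Fin n → ZMod 2} (ha : M *ᵥ a = 0) (ha_gt : ∀ k, j < k → a k = 0) :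
    a j = 0 := by
  obtain ⟨U, W, -, hW, hUW, rfl⟩ := h.exists_eq_mul
  have hRW : M * U * W = M := by rw [mul_assoc, hUW, mul_one]
  rw [← hW.mulVec_apply ha_gt]
  exact hR.eq_zero_of_mulVec_eq_zero (by rw [mulVec_mulVec, hRW, ha]) hlow

end Reduction

section Chains

variable {V : Type} [DecidableEq V] {n : ℕ} (σ : Fin n → Finset V)

noncomputable def simplexChain : (Fin n → ZMod 2) →ₗ[ZMod 2] (Finset V →₀ ZMod 2) :=
  Fintype.linearCombination (ZMod 2) fun k => Finsupp.single (σ k) 1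

variable {σ}

lemma chainOf_eq_simplexChain (R : Matrix (Fin n) (Fin n) (ZMod 2)) (j : Fin n) :
    chainOf σ R j = simplexChain σ fun r => R r j := by
  simp [chainOf, simplexChain, Fintype.linearCombination_apply]

lemma bnd_simplexChain_single_of_card_eq_one {k : Fin n} (hk : (σ k).card = 1) :
    bnd V (simplexChain σ (Pi.single k 1)) = Finsupp.single ∅ 1 := by
  obtain ⟨v, hv⟩ := Finset.card_eq_one.mp hk
  simp [simplexChain, hv, bnd_single]

lemma simplexChain_apply (a : Fin n → ZMod 2) (t : Finset V) :
    simplexChain σ a t = ∑ k, if σ k = t then a k else 0 := by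
  simp [simplexChain, Fintype.linearCombination_apply, Finsupp.single_apply]

lemma simplexChain_apply_self (hinj : Function.Injective σ) (a : Fin n → ZMod 2) (r : Fin n) :
    simplexChain σ a (σ r) = a r := by
  simp [simplexChain_apply, hinj.eq_iff]

lemma simplexChain_apply_of_notMem_range {t : Finset V} (ht : t ∉ Set.range σ)
    (a : Fin n → ZMod 2) : simplexChain σ a t = 0 := by
  rw [simplexChain_apply]
  exact Finset.sum_eq_zero fun k _ => if_neg fun h => ht ⟨k, h⟩

lemma simplexChain_mem_chainsOn {S : Set (Fin n)} {a : Fin n → ZMod 2}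
    (ha : ∀ k ∉ S, a k = 0) : simplexChain σ a ∈ chainsOn (σ '' S) := by
  rw [chainsOn, Finsupp.mem_supported']
  intro t ht
  rw [simplexChain_apply]
  refine Finset.sum_eq_zero fun k _ => ?_
  split_ifs with hk
  · exact ha k fun hkS => ht ⟨k, hkS, hk⟩
  · rfl

lemma exists_simplexChain_eq_of_mem_chainsOn (hinj : Function.Injective σ) {S : Set (Fin n)}
    {x : Finset V →₀ ZMod 2} (hx : x ∈ chainsOn (σ '' S)) :
    ∃ a : Fin n → ZMod 2, (∀ k ∉ S, a k = 0) ∧ simplexChain σ a = x := by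
  rw [chainsOn, Finsupp.mem_supported'] at hx
  refine ⟨fun k => x (σ k), fun k hk => hx _ fun ⟨k', hk', he⟩ => hk (hinj he ▸ hk'), ?_⟩
  ext t
  by_cases ht : t ∈ Set.range σ
  · obtain ⟨r, rfl⟩ := ht
    exact simplexChain_apply_self hinj _ r
  · rw [simplexChain_apply_of_notMem_range ht, hx t fun ⟨k, _, hk⟩ => ht ⟨k, hk⟩]

lemma mem_boundariesOn_image_iff (hinj : Function.Injective σ) {S : Set (Fin n)}
    {x : Finset V →₀ ZMod 2} :
    x ∈ boundariesOn (σ '' S) ↔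
      ∃ a : Fin n → ZMod 2, (∀ k ∉ S, a k = 0) ∧ bnd V (simplexChain σ a) = x := by
  constructor
  · rintro ⟨y, hy, rfl⟩
    obtain ⟨a, ha, rfl⟩ := exists_simplexChain_eq_of_mem_chainsOn hinj hy
    exact ⟨a, ha, rfl⟩
  · rintro ⟨a, ha, rfl⟩
    exact Submodule.mem_map_of_mem (simplexChain_mem_chainsOn ha)

lemma bnd_simplexChain_apply (a : Fin n → ZMod 2) (t : Finset V) :
    bnd V (simplexChain σ a) t =
      ∑ k, a k * if t ⊆ σ k ∧ t.card + 1 = (σ k).card then 1 else 0 := by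
  rw [simplexChain, Fintype.linearCombination_apply, map_sum, Finsupp.finsetSum_apply]
  refine Finset.sum_congr rfl fun k _ => ?_
  rw [map_smul, Finsupp.smul_apply, bnd_single_one_apply, smul_eq_mul]

lemma bnd_simplexChain_apply_self (a : Fin n → ZMod 2) (r : Fin n) :
    bnd V (simplexChain σ a) (σ r) = (bmat σ *ᵥ a) r := by
  simp only [bnd_simplexChain_apply, mulVec, dotProduct, bmat, mul_comm]

/-- `bnd` sends a vertex to the empty face, which is no simplex of the filtration; it is the only
part of the boundary outside the filtration. -/
lemma bnd_simplexChain (hinj : Function.Injective σ) (hne : ∀ i, (σ i).Nonempty)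
    (hfilt : ∀ j : Fin n, ∀ t ⊆ σ j, t.Nonempty → ∃ i ≤ j, σ i = t) (a : Fin n → ZMod 2) :
    bnd V (simplexChain σ a) =
      simplexChain σ (bmat σ *ᵥ a) + bnd V (simplexChain σ a) ∅ • Finsupp.single ∅ 1 := by
  ext t
  rw [Finsupp.add_apply, Finsupp.smul_apply, Finsupp.single_apply]
  by_cases ht : t ∈ Set.range σ
  · obtain ⟨r, rfl⟩ := ht
    rw [simplexChain_apply_self hinj, bnd_simplexChain_apply_self, if_neg (hne r).ne_empty.symm,
      smul_zero, add_zero]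
  · rw [simplexChain_apply_of_notMem_range ht, zero_add]
    split_ifs with h
    · rw [← h, smul_eq_mul, mul_one]
    · rw [smul_zero, bnd_simplexChain_apply]
      refine Finset.sum_eq_zero fun k _ => ?_
      rw [if_neg, mul_zero]
      rintro ⟨hsub, -⟩
      obtain ⟨i, -, hi⟩ := hfilt k t hsub (Finset.nonempty_iff_ne_empty.mpr (Ne.symm h))
      exact ht ⟨i, hi⟩

end Chains

section Filtration

variable {V : Type} [DecidableEq V] {n : ℕ} {σ : Fin n → Finset V}

lemma bmat_eq_zero_of_le (hinj : Function.Injective σ) (hne : ∀ i, (σ i).Nonempty)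
    (hfilt : ∀ j : Fin n, ∀ t ⊆ σ j, t.Nonempty → ∃ i ≤ j, σ i = t) {r k : Fin n}
    (hkr : k ≤ r) : bmat σ r k = 0 := by
  rw [bmat, if_neg]
  rintro ⟨hsub, hcard⟩
  obtain ⟨i, hik, hi⟩ := hfilt k (σ r) hsub (hne r)
  obtain rfl : i = r := hinj hi
  obtain rfl : i = k := le_antisymm hik hkr
  omega

lemma exists_lt_card_eq_one (hne : ∀ i, (σ i).Nonempty)
    (hfilt : ∀ j : Fin n, ∀ t ⊆ σ j, t.Nonempty → ∃ i ≤ j, σ i = t) {j : Fin n}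
    (hj : bmat σ *ᵥ Pi.single j 1 ≠ 0) : ∃ m < j, (σ m).card = 1 := by
  obtain ⟨v, hv⟩ := hne j
  obtain ⟨m, hmj, hm⟩ := hfilt j {v} (Finset.singleton_subset_iff.mpr hv)
    (Finset.singleton_nonempty v)
  refine ⟨m, hmj.lt_of_ne ?_, by rw [hm, Finset.card_singleton]⟩
  rintro rfl
  refine hj (funext fun r => ?_)
  rw [mulVec_single_one, col_apply, bmat, if_neg, Pi.zero_apply]
  rintro ⟨-, hcard⟩
  rw [hm, Finset.card_singleton] at hcard
  exact (hne r).card_pos.ne' (by omega)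

/-- The empty face that the reduction may add to the boundary is cancelled by a vertex before
`σ j`, which exists because `σ j` itself is no vertex. -/
lemma exists_bnd_simplexChain_eq_chainOf (hinj : Function.Injective σ)
    (hne : ∀ i, (σ i).Nonempty)
    (hfilt : ∀ j : Fin n, ∀ t ⊆ σ j, t.Nonempty → ∃ i ≤ j, σ i = t)
    {R : Matrix (Fin n) (Fin n) (ZMod 2)} (hred : Reduces (bmat σ) R) {j : Fin n}
    (hj : bmat σ *ᵥ Pi.single j 1 ≠ 0) :
    ∃ b : Fin n → ZMod 2, b j = 1 ∧ (∀ k, j < k → b k = 0) ∧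
      bnd V (simplexChain σ b) = chainOf σ R j := by
  obtain ⟨U, -, hU, -, -, rfl⟩ := hred.exists_eq_mul
  obtain ⟨m, hmj, hm⟩ := exists_lt_card_eq_one hne hfilt hj
  set u : Fin n → ZMod 2 := fun k => U k j
  obtain ⟨c, hc⟩ : ∃ c : ZMod 2,
      bnd V (simplexChain σ u) = simplexChain σ (bmat σ *ᵥ u) + c • Finsupp.single ∅ 1 :=
    ⟨_, bnd_simplexChain hinj hne hfilt u⟩
  refine ⟨u + c • Pi.single m 1, ?_, fun k hk => ?_, ?_⟩
  · simp [u, hU.2, hmj.ne']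
  · simp [u, hU.1 hk, (hmj.trans hk).ne']
  · rw [map_add, map_smul, map_add, map_smul, bnd_simplexChain_single_of_card_eq_one hm, hc,
      add_assoc, ZModModule.add_self, add_zero,
      chainOf_eq_simplexChain]
    rfl

lemma bnd_simplexChain_notMem_boundariesOn_lt (hinj : Function.Injective σ)
    {R : Matrix (Fin n) (Fin n) (ZMod 2)} (hred : Reduces (bmat σ) R) (hR : Reduced R)
    {i j : Fin n} (hlow : IsLow R i j) {b : Fin n → ZMod 2} (hbj : b j = 1)
    (hb_gt : ∀ k, j < k → b k = 0) :
    bnd V (simplexChain σ b) ∉ boundariesOn (σ '' {k | k < j}) := by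
  rw [mem_boundariesOn_image_iff hinj]
  rintro ⟨d, hd, hdb⟩
  have hbd : bmat σ *ᵥ (b - d) = 0 := funext fun r => by
    rw [← bnd_simplexChain_apply_self, map_sub, map_sub, hdb, sub_self, Pi.zero_apply]
    rfl
  have := hred.eq_zero_of_mulVec_eq_zero hR hlow hbd fun k hk => by
    simp [hb_gt k hk, hd k (not_lt.mpr hk.le)]
  simp [hbj, hd j (lt_irrefl j)] at this

lemma mem_boundariesOn_lt_or_add_mem (hinj : Function.Injective σ) {j : Fin n}
    {b : Fin n → ZMod 2} (hbj : b j = 1) (hb_gt : ∀ k, j < k → b k = 0)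
    {c : Finset V →₀ ZMod 2} (hc : c ∈ boundariesOn (σ '' {k | k ≤ j})) :
    c ∈ boundariesOn (σ '' {k | k < j}) ∨
      c + bnd V (simplexChain σ b) ∈ boundariesOn (σ '' {k | k < j}) := by
  obtain ⟨d, hd, rfl⟩ := (mem_boundariesOn_image_iff hinj).mp hc
  simp only [mem_boundariesOn_image_iff hinj]
  have hd_gt (k : Fin n) (hk : j < k) : d k = 0 := hd k (not_le.mpr hk)
  by_cases hdj : d j = 0
  · refine .inl ⟨d, fun k hk => ?_, rfl⟩
    rcases (not_lt.mp hk : j ≤ k).eq_or_lt with rfl | hjk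
    · exact hdj
    · exact hd_gt k hjk
  · refine .inr ⟨d + b, fun k hk => ?_, by rw [map_add, map_add]⟩
    rcases (not_lt.mp hk : j ≤ k).eq_or_lt with rfl | hjk
    · have hone_add : ∀ x : ZMod 2, x ≠ 0 → x + 1 = 0 := by decide
      rw [Pi.add_apply, hbj, hone_add _ hdj]
    · rw [Pi.add_apply, hd_gt k hjk, hb_gt k hjk, add_zero]

end Filtration

/-- if σ_j is a negative simplex with persistence pair (i, j),
then the class of the cycle given by column `R_j` generates the kernel of the
map H_*(K_{j-1}) → H_*(K_j) induced by inclusion, and this kernel is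
one-dimensional.  Concretely (identifying the kernel with
(Z(K_{j-1}) ∩ B(K_j)) / B(K_{j-1})): the chain `z` of column `R_j` is a cycle
of `K_{j-1}` which is a boundary in `K_j` but not in `K_{j-1}` (so its class
spans a nonzero subspace of the kernel), and every cycle of `K_{j-1}` that
becomes a boundary in `K_j` is homologous in `K_{j-1}` to `0` or to `z` (so
the kernel is exactly the one-dimensional span of the class of `z`). -/
theorem negative_simplex_kernel_one_dimensional
    {V : Type} [DecidableEq V] {n : ℕ} (σ : Fin n → Finset V)
    (hinj : Function.Injective σ)
    (hne : ∀ i, (σ i).Nonempty)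
    (hfilt : ∀ j : Fin n, ∀ t ⊆ σ j, t.Nonempty → ∃ i ≤ j, σ i = t)
    (R : Matrix (Fin n) (Fin n) (ZMod 2))
    (hred : Reduces (bmat σ) R) (hR : Reduced R)
    (i j : Fin n) (hlow : IsLow R i j) :
    chainOf σ R j ∈ cyclesOn {s | ∃ i' : Fin n, i' < j ∧ σ i' = s} ∧
    chainOf σ R j ∉ boundariesOn {s | ∃ i' : Fin n, i' < j ∧ σ i' = s} ∧
    chainOf σ R j ∈ boundariesOn {s | ∃ i' : Fin n, i' ≤ j ∧ σ i' = s} ∧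
    ∀ c ∈ cyclesOn {s | ∃ i' : Fin n, i' < j ∧ σ i' = s},
      c ∈ boundariesOn {s | ∃ i' : Fin n, i' ≤ j ∧ σ i' = s} →
        c ∈ boundariesOn {s | ∃ i' : Fin n, i' < j ∧ σ i' = s} ∨
        c + chainOf σ R j ∈ boundariesOn {s | ∃ i' : Fin n, i' < j ∧ σ i' = s} := by
  have himage (p : Fin n → Prop) : {s | ∃ k, p k ∧ σ k = s} = σ '' {k | p k} := rfl
  simp only [himage]
  have hcol : bmat σ *ᵥ Pi.single j 1 ≠ 0 := fun h => by
    simpa using hred.eq_zero_of_mulVec_eq_zero hR hlow h fun k hk => Pi.single_eq_of_ne hk.ne' 1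
  obtain ⟨b, hbj, hb_gt, hb⟩ := exists_bnd_simplexChain_eq_chainOf hinj hne hfilt hred hcol
  have hsupp : chainOf σ R j ∈ chainsOn (σ '' {k | k < j}) := by
    rw [chainOf_eq_simplexChain]
    exact simplexChain_mem_chainsOn fun k hk =>
      hred.apply_eq_zero_of_le (fun _ _ => bmat_eq_zero_of_le hinj hne hfilt) (not_lt.mp hk)
  rw [← hb] at hsupp ⊢
  exact ⟨Submodule.mem_inf.mpr ⟨hsupp, LinearMap.mem_ker.mpr (bnd_bnd _)⟩,
    bnd_simplexChain_notMem_boundariesOn_lt hinj hred hR hlow hbj hb_gt,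
    (mem_boundariesOn_image_iff hinj).mpr ⟨b, fun k hk => hb_gt k (not_le.mp hk), rfl⟩,
    fun c _ hc => mem_boundariesOn_lt_or_add_mem hinj hbj hb_gt hc⟩
end
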